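/- arXiv:2505.23572 — 4 statements merged into one kernel-verified Lean document; each statement's English description precedes it below -/
import Mathlib

section
/- Let (X, d) be a metric space, μ a Borel measure on X, r > 0 and v > 0 such that μ(B(x, r/2)) ≥ v for every x ∈ X. Let P ⊆ X be an r-uniformly discrete set, i.e. d(x, y) ≥ r for all distinct x, y ∈ P. Then for every x₀ ∈ X and R > 0: v · #(P ∩ B(x₀, R)) ≤ μ(B(x₀, R + r/2)); in particular, if μ(B(x₀, R + r/2)) < ∞ then P ∩ B(x₀, R) is a finite set of cardinality at most μ(B(x₀, R + r/2))/v. (Consequently, an r-uniformly discrete point process in such a space is locally L^∞, hence locally square integrable.) -/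
open MeasureTheory ENNReal Metric

theorem statement2_aux
    {X : Type*} [MetricSpace X] [MeasurableSpace X] [BorelSpace X]
    (μ : Measure X) (r : ℝ) (hr : 0 < r) (v : ℝ≥0∞)
    (hball : ∀ x : X, v ≤ μ (ball x (r / 2)))
    (P : Set X) (hP : ∀ x ∈ P, ∀ y ∈ P, x ≠ y → r ≤ dist x y)
    (x₀ : X) (R : ℝ) (F : Finset X) (hF : ↑F ⊆ P ∩ ball x₀ R) :
    v * F.card ≤ μ (ball x₀ (R + r / 2)) := by
  have hdisj : (↑F : Set X).PairwiseDisjoint (fun p => ball p (r / 2)) := by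
    intro p hp q hq hpq
    have hd : r ≤ dist p q := hP p (hF hp).1 q (hF hq).1 hpq
    exact (ball_disjoint_ball (by linarith)).mono le_rfl le_rfl
  have hsub : (⋃ p ∈ F, ball p (r / 2)) ⊆ ball x₀ (R + r / 2) := by
    intro y hy
    simp only [Set.mem_iUnion] at hy
    obtain ⟨p, hp, hy⟩ := hy
    have hpb := (hF hp).2
    simp only [mem_ball] at *
    have := dist_triangle y p x₀
    linarith
  calc v * F.card = ∑ p ∈ F, v := by rw [Finset.sum_const, nsmul_eq_mul, mul_comm]
    _ ≤ ∑ p ∈ F, μ (ball p (r / 2)) := Finset.sum_le_sum fun p _ => hball p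
    _ = μ (⋃ p ∈ F, ball p (r / 2)) :=
        (measure_biUnion_finset hdisj fun p _ => measurableSet_ball).symm
    _ ≤ μ (ball x₀ (R + r / 2)) := measure_mono hsub

/-- Let `(X, d)` be a metric space, `μ` a Borel measure on `X`, `r > 0` and
`v > 0` with `μ(B(x, r/2)) ≥ v` for every `x`.  If `P ⊆ X` is `r`-uniformly discrete, then for
every `x₀ ∈ X` and `R > 0` we have `v · #(P ∩ B(x₀, R)) ≤ μ(B(x₀, R + r/2))`; in particular, if
`μ(B(x₀, R + r/2)) < ∞` then `P ∩ B(x₀, R)` is finite of cardinality at most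
`μ(B(x₀, R + r/2))/v`. -/
theorem statement2
    {X : Type*} [MetricSpace X] [MeasurableSpace X] [BorelSpace X]
    (μ : Measure X) (r : ℝ) (hr : 0 < r) (v : ℝ≥0∞) (hv : 0 < v)
    (hball : ∀ x : X, v ≤ μ (ball x (r / 2)))
    (P : Set X) (hP : ∀ x ∈ P, ∀ y ∈ P, x ≠ y → r ≤ dist x y)
    (x₀ : X) (R : ℝ) (hR : 0 < R) :
    v * (P ∩ ball x₀ R).encard ≤ μ (ball x₀ (R + r / 2)) ∧
    (μ (ball x₀ (R + r / 2)) < ⊤ →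
      (P ∩ ball x₀ R).Finite ∧
      ((P ∩ ball x₀ R).encard : ℝ≥0∞) ≤ μ (ball x₀ (R + r / 2)) / v) := by
  have key : v * (P ∩ ball x₀ R).encard ≤ μ (ball x₀ (R + r / 2)) := by
    by_cases h : (P ∩ ball x₀ R).Finite
    · rw [Set.Finite.encard_eq_coe_toFinset_card h]
      have := statement2_aux μ r hr v hball P hP x₀ R h.toFinset (by simp)
      simpa using this
    · rw [Set.Infinite.encard_eq h]
      have hμ : μ (ball x₀ (R + r / 2)) = ⊤ := by
        refine top_unique ?_
        have : ∀ n : ℕ, v * n ≤ μ (ball x₀ (R + r / 2)) := by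
          intro n
          obtain ⟨F, hFsub, hFcard⟩ := Set.Infinite.exists_subset_card_eq h n
          have := statement2_aux μ r hr v hball P hP x₀ R F hFsub
          rwa [hFcard] at this
        have : v * ⊤ ≤ μ (ball x₀ (R + r / 2)) := by
          rw [← ENNReal.iSup_natCast, ENNReal.mul_iSup]
          exact iSup_le this
        rwa [ENNReal.mul_top hv.ne'] at this
      rw [hμ]
      exact le_top
  refine ⟨key, fun hfin => ?_⟩
  have hfinite : (P ∩ ball x₀ R).Finite := by
    by_contra h
    rw [Set.Infinite.encard_eq h] at key
    simp [ENNReal.mul_top hv.ne'] at key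
    rw [key] at hfin
    exact absurd hfin (lt_irrefl _)
  refine ⟨hfinite, ?_⟩
  rw [ENNReal.le_div_iff_mul_le (Or.inl hv.ne') (Or.inr (hfin.trans_le le_top).ne)]
  rwa [mul_comm]
end

section
/- Let G be a unimodular locally compact second countable group with Haar measure m, acting on itself by left translations, let (Ω, ℙ) be a probability space with a measure-preserving measurable G-action, and let Λ : Ω → Measure(G) be a stationary point process which is locally square integrable, i.e. E[Λ(B)²] < ∞ for every bounded Borel set B. Let b : G → [0, ∞) be a bounded measurable function with bounded support and ∫_G b dm = 1, and let f, g : G → ℂ be bounded measurable functions with bounded support. Then E[ ∫_G ∫_G (f^⋆ ⋆ g)(x⁻¹y) b(x) dΛ(y) dΛ(x) ] = E[ conj(Λ(f)) · Λ(g) ], where f^⋆(x) := conj(f(x⁻¹)), (f^⋆ ⋆ g)(x) := ∫_G f^⋆(t) g(t⁻¹x) dm(t), and Λ(f)(ω) := ∫_G f dΛ_ω. -/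
/-!
Substituting `t = x⁻¹ s` in the convolution and applying Fubini turns the left side into
`E ∫ Λ(g(s⁻¹ ·)) · Λ(conj f(s⁻¹ ·) · b) dm(s)`. Translating the process by `s⁻¹` does not change
expectations, and it turns the integrand at `s` into `Λ(g) · Λ(conj f · b(s ·))`. Integrating
this in `s` first, right invariance gives `∫ b(s x) dm(s) = ∫ b dm = 1`, leaving
`conj Λ(f) · Λ(g)`. Local square integrability makes `Λ` almost surely locally finite and
dominates every integrand by a multiple of `Λ(L)²` for a bounded set `L`, which justifies all
exchanges of integrals.
-/

open MeasureTheory ENNReal Set Function ComplexConjugate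
open ProbabilityTheory (Kernel IsSFiniteKernel IsFiniteKernel)
open scoped Pointwise

section Integrability

variable {X E : Type*} [MeasurableSpace X] [NormedAddCommGroup E] {μ : Measure X} {F : X → E}
  {C : ℝ} {K : Set X}

theorem integrable_of_norm_le_of_support_subset [TopologicalSpace X] [IsFiniteMeasureOnCompacts μ]
    (hF : AEStronglyMeasurable F μ) (hC : ∀ x, ‖F x‖ ≤ C) (hK : IsCompact K)
    (hFK : support F ⊆ K) : Integrable F μ :=
  (integrableOn_iff_integrable_of_support_subset hFK).1 <|
    Measure.integrableOn_of_bounded hK.measure_lt_top.ne hF (.of_forall hC)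

theorem norm_integral_le_of_support_subset [NormedSpace ℝ E] (hC : ∀ x, ‖F x‖ ≤ C)
    (hK : μ K < ∞) (hFK : support F ⊆ K) : ‖∫ x, F x ∂μ‖ ≤ C * μ.real K := by
  rw [← setIntegral_eq_integral_of_forall_compl_eq_zero fun x hx => notMem_support.1 (hx <| hFK ·)]
  exact norm_setIntegral_le_of_norm_le_const hK fun x _ => hC x

end Integrability

theorem ProbabilityTheory.Kernel.isSFiniteKernel_of_forall_lt_top {α β : Type*}
    [MeasurableSpace α] [MeasurableSpace β] (κ : Kernel α β) (h : ∀ a, κ a univ < ∞) :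
    IsSFiniteKernel κ := by
  classical
  set A : ℕ → Set α := disjointed fun n => {a | κ a univ < n}
  have hA : ∀ n, MeasurableSet (A n) :=
    .disjointed fun n => measurableSet_lt (κ.measurable_coe .univ) measurable_const
  have hfin : ∀ n, IsFiniteKernel (piecewise (hA n) κ 0) := fun n =>
    ⟨⟨n, natCast_lt_top n, fun a => by
      rw [piecewise_apply]
      split_ifs with ha
      exacts [(disjointed_subset _ n ha).le, zero_le]⟩⟩
  refine ⟨⟨_, hfin, ext fun a => Measure.ext fun s hs => ?_⟩⟩
  obtain ⟨n, hn⟩ : ∃ n, a ∈ A n := by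
    rw [← mem_iUnion, iUnion_disjointed]
    exact mem_iUnion.2 (ENNReal.exists_nat_gt (h a).ne)
  rw [sum_apply' _ _ hs, tsum_eq_single n fun k hk => ?_, piecewise_apply', if_pos hn]
  rw [piecewise_apply', if_neg ((disjoint_disjointed _ hk).notMem_of_mem_right hn)]
  rfl

theorem aestronglyMeasurable_integral_of_support_subset {Z X E : Type*} [MeasurableSpace Z]
    [MeasurableSpace X] [NormedAddCommGroup E] [NormedSpace ℝ E] {Λ : Z → Measure X}
    (hΛ : Measurable Λ) {L : Set X} (hL : MeasurableSet L) {F : Z → X → E}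
    (hF : StronglyMeasurable (uncurry F)) {μ : Measure Z} (hfin : ∀ᵐ z ∂μ, Λ z L < ∞)
    (hFL : ∀ᵐ z ∂μ, support (F z) ⊆ L) :
    AEStronglyMeasurable (fun z => ∫ x, F z x ∂Λ z) μ := by
  have hfin_meas : MeasurableSet {z | Λ z L < ∞} :=
    measurableSet_lt ((Measure.measurable_coe hL).comp hΛ) measurable_const
  -- Restricted to `L` and killed where `Λ z L = ∞`, `Λ` becomes an s-finite kernel, for which
  -- parametric integrals are measurable; a.e. it still integrates `F z` like `Λ z`.
  let κ : Kernel Z X := Kernel.piecewise hfin_meas (Kernel.restrict ⟨Λ, hΛ⟩ hL) 0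
  have : IsSFiniteKernel κ := κ.isSFiniteKernel_of_forall_lt_top fun z => by
    by_cases hz : Λ z L < ∞
    · simp [κ, Kernel.piecewise_apply, hz, Kernel.restrict_apply]
    · simp [κ, Kernel.piecewise_apply, hz]
  refine (hF.integral_kernel_prod_right' (κ := κ)).aestronglyMeasurable.congr ?_
  filter_upwards [hfin, hFL] with z hz hzL
  rw [Kernel.piecewise_apply, if_pos (show z ∈ {z | Λ z L < ∞} from hz), Kernel.restrict_apply]
  exact setIntegral_eq_integral_of_forall_compl_eq_zero fun x hx =>
    notMem_support.1 (hx <| hzL ·)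

section PointProcess

variable {X Ω : Type*} [MeasurableSpace X] [MeasurableSpace Ω] {ℙ : Measure Ω}
  {Λ : Ω → Measure X}

theorem ae_isFiniteMeasureOnCompacts [TopologicalSpace X] [OpensMeasurableSpace X]
    [WeaklyLocallyCompactSpace X] [SigmaCompactSpace X] (hΛ : Measurable Λ)
    (hL2 : ∀ B : Set X, MeasurableSet B → (∃ K : Set X, IsCompact K ∧ B ⊆ K) →
      ∫⁻ ω, (Λ ω B) ^ 2 ∂ℙ < ⊤) :
    ∀ᵐ ω ∂ℙ, IsFiniteMeasureOnCompacts (Λ ω) := by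
  let K := CompactExhaustion.choice X
  have hU : ∀ n, MeasurableSet (interior (K (n + 1))) := fun n => isOpen_interior.measurableSet
  have hfin : ∀ n, ∀ᵐ ω ∂ℙ, Λ ω (interior (K (n + 1))) < ∞ := fun n => by
    have hsq := hL2 _ (hU n) ⟨_, K.isCompact _, interior_subset⟩
    filter_upwards [ae_lt_top (((Measure.measurable_coe (hU n)).comp hΛ).pow_const 2) hsq.ne]
      with ω hω
    exact lt_top_iff_ne_top.2 fun h => by simp [h] at hω
  filter_upwards [ae_all_iff.2 hfin] with ω hω
  refine ⟨fun C hC => ?_⟩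
  obtain ⟨n, hn⟩ := K.exists_superset_of_isCompact hC
  exact (measure_mono (hn.trans (K.subset_interior_succ n))).trans_lt (hω n)

theorem integrable_measureReal_sq (hΛ : Measurable Λ) {B : Set X} (hB : MeasurableSet B)
    (h : ∫⁻ ω, (Λ ω B) ^ 2 ∂ℙ < ∞) : Integrable (fun ω => (Λ ω).real B ^ 2) ℙ := by
  simpa [measureReal_def, ENNReal.toReal_pow] using integrable_toReal_of_lintegral_ne_top
    (((Measure.measurable_coe hB).comp hΛ).pow_const 2).aemeasurable h.ne

theorem exists_measurableSet_superset_integrable_measureReal_sq [TopologicalSpace X]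
    [OpensMeasurableSpace X] [WeaklyLocallyCompactSpace X] (hΛ : Measurable Λ)
    (hlf : ∀ᵐ ω ∂ℙ, IsFiniteMeasureOnCompacts (Λ ω))
    (hL2 : ∀ B : Set X, MeasurableSet B → (∃ K : Set X, IsCompact K ∧ B ⊆ K) →
      ∫⁻ ω, (Λ ω B) ^ 2 ∂ℙ < ⊤) {K : Set X} (hK : IsCompact K) :
    ∃ L, MeasurableSet L ∧ K ⊆ L ∧ (∀ᵐ ω ∂ℙ, Λ ω L < ∞) ∧
      Integrable (fun ω => (Λ ω).real L ^ 2) ℙ := by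
  obtain ⟨K', hK', hKK'⟩ := exists_compact_superset hK
  have hL : MeasurableSet (interior K') := isOpen_interior.measurableSet
  refine ⟨_, hL, hKK', hlf.mono fun ω _ => ?_,
    integrable_measureReal_sq hΛ hL (hL2 _ hL ⟨K', hK', interior_subset⟩)⟩
  exact (measure_mono interior_subset).trans_lt hK'.measure_lt_top

theorem integrable_uncurry_integral_mul_integral {Y 𝕜 : Type*} [MeasurableSpace Y]
    [NormedRing 𝕜] [NormedSpace ℝ 𝕜] [SFinite ℙ] {m : Measure Y} [SFinite m] (hΛ : Measurable Λ)
    {L : Set X} (hL : MeasurableSet L) (hfin : ∀ᵐ ω ∂ℙ, Λ ω L < ∞)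
    (hsq : Integrable (fun ω => (Λ ω).real L ^ 2) ℙ) {S : Set Y} (hS : MeasurableSet S)
    (hmS : m S ≠ ∞) {u v : Y → X → 𝕜} (hu : StronglyMeasurable (uncurry u))
    (hv : StronglyMeasurable (uncurry v)) {Cu Cv : ℝ} (hCu : ∀ s y, ‖u s y‖ ≤ Cu)
    (hCv : ∀ s x, ‖v s x‖ ≤ Cv) (huL : ∀ s ∈ S, support (u s) ⊆ L)
    (hvL : ∀ s, support (v s) ⊆ L) (hvS : ∀ s ∉ S, v s = 0) :
    Integrable (uncurry fun ω s => (∫ y, u s y ∂Λ ω) * ∫ x, v s x ∂Λ ω) (ℙ.prod m) := by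
  have hdom : Integrable (fun z : Ω × Y => Cu * Cv * (Λ z.1).real L ^ 2 * S.indicator 1 z.2)
      (ℙ.prod m) :=
    (hsq.const_mul (Cu * Cv)).mul_prod ((integrable_indicator_iff hS).2 (integrableOn_const hmS))
  refine hdom.mono' ?_ ?_
  · have hsupp : support (uncurry fun ω s => (∫ y, u s y ∂Λ ω) * ∫ x, v s x ∂Λ ω) ⊆ univ ×ˢ S :=
      fun ⟨_, s⟩ hz => ⟨trivial, by_contra fun hs => hz (by simp [hvS s hs])⟩
    rw [← indicator_eq_self.2 hsupp,
      aestronglyMeasurable_indicator_iff (MeasurableSet.univ.prod hS), ← Measure.prod_restrict,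
      Measure.restrict_univ]
    have hfin' : ∀ᵐ z ∂ℙ.prod (m.restrict S), Λ z.1 L < ∞ :=
      Measure.quasiMeasurePreserving_fst.ae hfin
    have hS' : ∀ᵐ z ∂ℙ.prod (m.restrict S), z.2 ∈ S :=
      Measure.quasiMeasurePreserving_snd.ae (ae_restrict_mem hS)
    have hproj : Measurable fun q : (Ω × Y) × X => (q.1.2, q.2) :=
      measurable_fst.snd.prodMk measurable_snd
    exact (aestronglyMeasurable_integral_of_support_subset (F := fun z => u z.2)
      (hΛ.comp measurable_fst) hL (hu.comp_measurable hproj) hfin'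
      (hS'.mono fun z hz => huL _ hz)).mul
      (aestronglyMeasurable_integral_of_support_subset (F := fun z => v z.2)
      (hΛ.comp measurable_fst) hL (hv.comp_measurable hproj) hfin' (.of_forall fun z => hvL _))
  · filter_upwards [Measure.quasiMeasurePreserving_fst.ae hfin] with ⟨ω, s⟩ hω
    by_cases hs : s ∈ S
    · have := norm_mul_le_of_le (norm_integral_le_of_support_subset (hCu s) hω (huL s hs))
        (norm_integral_le_of_support_subset (hCv s) hω (hvL s))
      simp only [uncurry_apply_pair, indicator_of_mem hs, Pi.one_apply, mul_one]
      linarith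
    · simp [hvS s hs, hs]

end PointProcess

structure BddMeasurableBddSupport {X E : Type*} [TopologicalSpace X] [MeasurableSpace X]
    [NormedAddCommGroup E] [MeasurableSpace E] (f : X → E) : Prop where
  measurable : Measurable f
  bdd : ∃ C, ∀ x, ‖f x‖ ≤ C
  bddSupport : ∃ K, IsCompact K ∧ support f ⊆ K

section Group

variable {G : Type*} [Group G]

theorem mem_mul_inv_of_inv_mul_mem {A B : Set G} {s x : G} (hx : x ∈ A) (h : s⁻¹ * x ∈ B) :
    s ∈ A * B⁻¹ :=
  ⟨x, hx, (s⁻¹ * x)⁻¹, by simpa using h, by group⟩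

theorem mem_mul_of_inv_mul_mem {A B : Set G} {s y : G} (hs : s ∈ A) (h : s⁻¹ * y ∈ B) :
    y ∈ A * B :=
  ⟨s, hs, _, h, mul_inv_cancel_left s y⟩

theorem mem_of_conj_inv_mul_mul_ne_zero {f b : G → ℂ} {Kf Kb : Set G} (hfK : support f ⊆ Kf)
    (hbK : support b ⊆ Kb) {s x : G} (h : conj (f (s⁻¹ * x)) * b x ≠ 0) :
    x ∈ Kb ∧ s ∈ Kb * Kf⁻¹ := by
  obtain ⟨hf, hb⟩ := mul_ne_zero_iff.1 h
  exact ⟨hbK hb, mem_mul_inv_of_inv_mul_mem (hbK hb) (hfK (by simpa using hf))⟩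

theorem mem_of_conj_mul_mul_ne_zero {f b : G → ℂ} {Kf Kb : Set G} (hfK : support f ⊆ Kf)
    (hbK : support b ⊆ Kb) {s x : G} (h : conj (f x) * b (s * x) ≠ 0) :
    x ∈ Kf ∧ s ∈ Kb * Kf⁻¹ := by
  obtain ⟨hf, hb⟩ := mul_ne_zero_iff.1 h
  exact ⟨hfK (by simpa using hf), ⟨s * x, hbK hb, x⁻¹, by simpa using hfK (by simpa using hf),
    mul_inv_cancel_right s x⟩⟩

variable [MeasurableSpace G] [MeasurableMul G] {m : Measure G}

theorem integral_conj_inv_mul_eq [m.IsMulLeftInvariant] (f g : G → ℂ) (x y : G) :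
    ∫ t, conj (f t⁻¹) * g (t⁻¹ * (x⁻¹ * y)) ∂m = ∫ s, conj (f (s⁻¹ * x)) * g (s⁻¹ * y) ∂m := by
  rw [← integral_mul_left_eq_self _ x⁻¹]
  simp [mul_assoc]

theorem integral_mul_integral_map_mul_left (ν : Measure G) (f g b : G → ℂ) (s : G) :
    (∫ y, g y ∂ν.map (s⁻¹ * ·)) * ∫ x, conj (f x) * b (s * x) ∂ν.map (s⁻¹ * ·) =
      (∫ y, g (s⁻¹ * y) ∂ν) * ∫ x, conj (f (s⁻¹ * x)) * b x ∂ν := by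
  rw [← MeasurableEquiv.coe_mulLeft, integral_map_equiv, integral_map_equiv]
  simp

end Group

section Stationary

variable {G Ω : Type*} [Group G] [MeasurableSpace G] [MeasurableSpace Ω] [MulAction G Ω]
  {ℙ : Measure Ω} {Λ : Ω → Measure G}

theorem integral_comp_map_mul_left (hact : ∀ g : G, Measurable fun ω : Ω => g • ω)
    (hpres : ∀ g : G, MeasurePreserving (fun ω : Ω => g • ω) ℙ ℙ)
    (hequiv : ∀ (g : G) (ω : Ω), Λ (g • ω) = Measure.map (fun x => g * x) (Λ ω))
    {E : Type*} [NormedAddCommGroup E] [NormedSpace ℝ E] (g : G) (Φ : Measure G → E) :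
    ∫ ω, Φ ((Λ ω).map (g * ·)) ∂ℙ = ∫ ω, Φ (Λ ω) ∂ℙ := by
  let e : Ω ≃ᵐ Ω :=
    { MulAction.toPerm g with measurable_toFun := hact g, measurable_invFun := hact g⁻¹ }
  simp_rw [← hequiv]
  exact (hpres g).integral_comp e.measurableEmbedding fun ω => Φ (Λ ω)

theorem integral_integral_mul_eq_of_stationary [MeasurableMul G] [SFinite ℙ] {m : Measure G}
    [SFinite m] (hact : ∀ g : G, Measurable fun ω : Ω => g • ω)
    (hpres : ∀ g : G, MeasurePreserving (fun ω : Ω => g • ω) ℙ ℙ)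
    (hequiv : ∀ (g : G) (ω : Ω), Λ (g • ω) = Measure.map (fun x => g * x) (Λ ω))
    {f g b : G → ℂ}
    (hP : Integrable (uncurry fun ω s =>
      (∫ y, g (s⁻¹ * y) ∂Λ ω) * ∫ x, conj (f (s⁻¹ * x)) * b x ∂Λ ω) (ℙ.prod m))
    (hQ : Integrable (uncurry fun ω s =>
      (∫ y, g y ∂Λ ω) * ∫ x, conj (f x) * b (s * x) ∂Λ ω) (ℙ.prod m)) :
    ∫ ω, ∫ s, (∫ y, g (s⁻¹ * y) ∂Λ ω) * ∫ x, conj (f (s⁻¹ * x)) * b x ∂Λ ω ∂m ∂ℙ =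
      ∫ ω, ∫ s, (∫ y, g y ∂Λ ω) * ∫ x, conj (f x) * b (s * x) ∂Λ ω ∂m ∂ℙ := by
  rw [integral_integral_swap hP, integral_integral_swap hQ]
  congr 1 with s
  simpa only [integral_mul_integral_map_mul_left] using integral_comp_map_mul_left hact hpres
    hequiv s⁻¹ fun ν => (∫ y, g y ∂ν) * ∫ x, conj (f x) * b (s * x) ∂ν

end Stationary

section Convolution

variable {G : Type*} [Group G] [TopologicalSpace G] [IsTopologicalGroup G] [MeasurableSpace G]
  [MeasurableMul₂ G] {m ν : Measure G} {f g b : G → ℂ}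

theorem integral_conv_mul_eq_integral_integral [MeasurableInv G] [m.IsMulLeftInvariant]
    [IsFiniteMeasureOnCompacts m] [SFinite m] [IsFiniteMeasureOnCompacts ν] [SFinite ν]
    (hf : BddMeasurableBddSupport f) (hg : BddMeasurableBddSupport g)
    (hb : BddMeasurableBddSupport b) (x : G) :
    (∫ y, (∫ t, conj (f t⁻¹) * g (t⁻¹ * (x⁻¹ * y)) ∂m) ∂ν) * b x =
      ∫ s, (∫ y, g (s⁻¹ * y) ∂ν) * (conj (f (s⁻¹ * x)) * b x) ∂m := by
  obtain ⟨hfm, ⟨Cf, hCf⟩, Kf, hKf, hfK⟩ := hf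
  obtain ⟨hgm, ⟨Cg, hCg⟩, Kg, hKg, hgK⟩ := hg
  obtain ⟨hbm, ⟨Cb, hCb⟩, Kb, hKb, hbK⟩ := hb
  have hS := hKb.mul hKf.inv
  have hint : Integrable (uncurry fun y s => g (s⁻¹ * y) * (conj (f (s⁻¹ * x)) * b x))
      (ν.prod m) := by
    refine integrable_of_norm_le_of_support_subset (C := Cg * (Cf * Cb)) ?_
      (fun z => norm_mul_le_of_le (hCg _) (norm_mul_le_of_le (by simpa using hCf _) (hCb x)))
      ((hS.mul hKg).prod hS) fun ⟨y, s⟩ hz => ?_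
    · exact ((hgm.comp (measurable_snd.inv.mul measurable_fst)).mul
        ((Complex.continuous_conj.measurable.comp (hfm.comp (measurable_snd.inv.mul_const x))).mul
          measurable_const)).aestronglyMeasurable
    · obtain ⟨hg0, hfb0⟩ := mul_ne_zero_iff.1 hz
      have hs := (mem_of_conj_inv_mul_mul_ne_zero hfK hbK hfb0).2
      exact ⟨mem_mul_of_inv_mul_mem hs (hgK hg0), hs⟩
  calc (∫ y, (∫ t, conj (f t⁻¹) * g (t⁻¹ * (x⁻¹ * y)) ∂m) ∂ν) * b x
      = ∫ y, ∫ s, g (s⁻¹ * y) * (conj (f (s⁻¹ * x)) * b x) ∂m ∂ν := by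
        simp_rw [integral_conj_inv_mul_eq, ← integral_mul_const]
        congr 1 with y
        congr 1 with s
        ring
    _ = ∫ s, ∫ y, g (s⁻¹ * y) * (conj (f (s⁻¹ * x)) * b x) ∂ν ∂m := integral_integral_swap hint
    _ = _ := by simp_rw [integral_mul_const]

theorem integral_integral_conv_mul_eq [MeasurableInv G] [m.IsMulLeftInvariant]
    [IsFiniteMeasureOnCompacts m] [SFinite m] [IsFiniteMeasureOnCompacts ν] [SFinite ν]
    (hf : BddMeasurableBddSupport f) (hg : BddMeasurableBddSupport g)
    (hb : BddMeasurableBddSupport b) :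
    ∫ x, (∫ y, (∫ t, conj (f t⁻¹) * g (t⁻¹ * (x⁻¹ * y)) ∂m) ∂ν) * b x ∂ν =
      ∫ s, (∫ y, g (s⁻¹ * y) ∂ν) * ∫ x, conj (f (s⁻¹ * x)) * b x ∂ν ∂m := by
  simp_rw [integral_conv_mul_eq_integral_integral hf hg hb]
  obtain ⟨hfm, ⟨Cf, hCf⟩, Kf, hKf, hfK⟩ := hf
  obtain ⟨hgm, ⟨Cg, hCg⟩, Kg, hKg, hgK⟩ := hg
  obtain ⟨hbm, ⟨Cb, hCb⟩, Kb, hKb, hbK⟩ := hb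
  have hS := hKb.mul hKf.inv
  have hfb_norm : ∀ s x, ‖conj (f (s⁻¹ * x)) * b x‖ ≤ Cf * Cb := fun s x =>
    norm_mul_le_of_le (by simpa using hCf _) (hCb x)
  have hCg0 : 0 ≤ Cg := (norm_nonneg _).trans (hCg 1)
  have hCfb0 : 0 ≤ Cf * Cb := (norm_nonneg _).trans (hfb_norm 1 1)
  have hint : Integrable
      (uncurry fun x s => (∫ y, g (s⁻¹ * y) ∂ν) * (conj (f (s⁻¹ * x)) * b x)) (ν.prod m) := by
    refine integrable_of_norm_le_of_support_subset
      (C := Cg * ν.real (Kb * Kf⁻¹ * Kg) * (Cf * Cb)) ?_ (fun ⟨x, s⟩ => ?_) (hKb.prod hS)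
      fun ⟨x, s⟩ hz => mem_of_conj_inv_mul_mul_ne_zero hfK hbK (right_ne_zero_of_mul hz)
    · exact ((hgm.comp (measurable_fst.inv.mul measurable_snd)).stronglyMeasurable
        |>.integral_prod_right' (ν := ν) |>.comp_measurable measurable_snd).aestronglyMeasurable.mul
        ((Complex.continuous_conj.measurable.comp
          (hfm.comp (measurable_snd.inv.mul measurable_fst))).mul
          (hbm.comp measurable_fst)).aestronglyMeasurable
    · by_cases h : conj (f (s⁻¹ * x)) * b x = 0
      · simpa [h] using mul_nonneg (mul_nonneg hCg0 measureReal_nonneg) hCfb0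
      · have hs := (mem_of_conj_inv_mul_mul_ne_zero hfK hbK h).2
        exact norm_mul_le_of_le (norm_integral_le_of_support_subset (fun y => hCg _)
          (hS.mul hKg).measure_lt_top fun y hy => mem_mul_of_inv_mul_mem hs (hgK hy))
          (hfb_norm s x)
  rw [integral_integral_swap hint]
  simp_rw [integral_const_mul]

theorem integral_integral_conj_mul_mul_left_eq [m.IsMulRightInvariant]
    [IsFiniteMeasureOnCompacts m] [SFinite m] [IsFiniteMeasureOnCompacts ν] [SFinite ν]
    (hf : BddMeasurableBddSupport f) (hb : BddMeasurableBddSupport b) (hb1 : ∫ x, b x ∂m = 1)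
    (g : G → ℂ) :
    ∫ s, (∫ y, g y ∂ν) * ∫ x, conj (f x) * b (s * x) ∂ν ∂m =
      conj (∫ x, f x ∂ν) * ∫ x, g x ∂ν := by
  obtain ⟨hfm, ⟨Cf, hCf⟩, Kf, hKf, hfK⟩ := hf
  obtain ⟨hbm, ⟨Cb, hCb⟩, Kb, hKb, hbK⟩ := hb
  have hint : Integrable (uncurry fun s x => conj (f x) * b (s * x)) (m.prod ν) := by
    refine integrable_of_norm_le_of_support_subset (C := Cf * Cb) ?_
      (fun z => norm_mul_le_of_le (by simpa using hCf z.2) (hCb _)) ((hKb.mul hKf.inv).prod hKf)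
      fun z hz => (mem_of_conj_mul_mul_ne_zero hfK hbK hz).symm
    exact ((Complex.continuous_conj.measurable.comp (hfm.comp measurable_snd)).mul
      (hbm.comp (measurable_fst.mul measurable_snd))).aestronglyMeasurable
  have hb_shift : ∀ x, ∫ s, b (s * x) ∂m = 1 := fun x =>
    (integral_mul_right_eq_self b x).trans hb1
  rw [integral_const_mul, integral_integral_swap hint, mul_comm, ← integral_conj]
  simp_rw [integral_const_mul, hb_shift, mul_one]

variable [OpensMeasurableSpace G] [WeaklyLocallyCompactSpace G] {Ω : Type*} [MeasurableSpace Ω]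
  {ℙ : Measure Ω} [SFinite ℙ] {Λ : Ω → Measure G} [IsFiniteMeasureOnCompacts m] [SFinite m]

theorem integrable_integral_inv_mul_mul_integral [MeasurableInv G] (hΛ : Measurable Λ)
    (hlf : ∀ᵐ ω ∂ℙ, IsFiniteMeasureOnCompacts (Λ ω))
    (hL2 : ∀ B : Set G, MeasurableSet B → (∃ K : Set G, IsCompact K ∧ B ⊆ K) →
      ∫⁻ ω, (Λ ω B) ^ 2 ∂ℙ < ⊤)
    (hf : BddMeasurableBddSupport f) (hg : BddMeasurableBddSupport g)
    (hb : BddMeasurableBddSupport b) :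
    Integrable (uncurry fun ω s =>
      (∫ y, g (s⁻¹ * y) ∂Λ ω) * ∫ x, conj (f (s⁻¹ * x)) * b x ∂Λ ω) (ℙ.prod m) := by
  obtain ⟨hfm, ⟨Cf, hCf⟩, Kf, hKf, hfK⟩ := hf
  obtain ⟨hgm, ⟨Cg, hCg⟩, Kg, hKg, hgK⟩ := hg
  obtain ⟨hbm, ⟨Cb, hCb⟩, Kb, hKb, hbK⟩ := hb
  obtain ⟨KS, hKS, hS⟩ := exists_compact_superset (hKb.mul hKf.inv)
  obtain ⟨L, hL, hKL, hfin, hsq⟩ :=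
    exists_measurableSet_superset_integrable_measureReal_sq hΛ hlf hL2 (hKb.union (hKS.mul hKg))
  have hinv_mul : Measurable fun q : G × G => q.1⁻¹ * q.2 := measurable_fst.inv.mul measurable_snd
  refine integrable_uncurry_integral_mul_integral hΛ hL hfin hsq isOpen_interior.measurableSet
    ((measure_mono interior_subset).trans_lt hKS.measure_lt_top).ne
    (hgm.comp hinv_mul).stronglyMeasurable
    ((Complex.continuous_conj.measurable.comp (hfm.comp hinv_mul)).mul
      (hbm.comp measurable_snd)).stronglyMeasurable
    (fun s y => hCg _) (fun s x => norm_mul_le_of_le (by simpa using hCf _) (hCb x))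
    (fun s hs y hy => hKL (Or.inr (mem_mul_of_inv_mul_mem (interior_subset hs) (hgK hy))))
    (fun s x hx => hKL (Or.inl (mem_of_conj_inv_mul_mul_ne_zero hfK hbK hx).1)) fun s hs => ?_
  exact funext fun x => by_contra fun hx => hs (hS (mem_of_conj_inv_mul_mul_ne_zero hfK hbK hx).2)

theorem integrable_integral_mul_integral_conj_mul_mul_left (hΛ : Measurable Λ)
    (hlf : ∀ᵐ ω ∂ℙ, IsFiniteMeasureOnCompacts (Λ ω))
    (hL2 : ∀ B : Set G, MeasurableSet B → (∃ K : Set G, IsCompact K ∧ B ⊆ K) →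
      ∫⁻ ω, (Λ ω B) ^ 2 ∂ℙ < ⊤)
    (hf : BddMeasurableBddSupport f) (hg : BddMeasurableBddSupport g)
    (hb : BddMeasurableBddSupport b) :
    Integrable (uncurry fun ω s =>
      (∫ y, g y ∂Λ ω) * ∫ x, conj (f x) * b (s * x) ∂Λ ω) (ℙ.prod m) := by
  obtain ⟨hfm, ⟨Cf, hCf⟩, Kf, hKf, hfK⟩ := hf
  obtain ⟨hgm, ⟨Cg, hCg⟩, Kg, hKg, hgK⟩ := hg
  obtain ⟨hbm, ⟨Cb, hCb⟩, Kb, hKb, hbK⟩ := hb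
  obtain ⟨KS, hKS, hS⟩ := exists_compact_superset (hKb.mul hKf.inv)
  obtain ⟨L, hL, hKL, hfin, hsq⟩ :=
    exists_measurableSet_superset_integrable_measureReal_sq hΛ hlf hL2 (hKf.union hKg)
  refine integrable_uncurry_integral_mul_integral hΛ hL hfin hsq isOpen_interior.measurableSet
    ((measure_mono interior_subset).trans_lt hKS.measure_lt_top).ne
    (hgm.comp measurable_snd).stronglyMeasurable
    ((Complex.continuous_conj.measurable.comp (hfm.comp measurable_snd)).mul
      (hbm.comp (measurable_fst.mul measurable_snd))).stronglyMeasurable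
    (fun s y => hCg _) (fun s x => norm_mul_le_of_le (by simpa using hCf _) (hCb _))
    (fun s _ y hy => hKL (Or.inr (hgK hy)))
    (fun s x hx => hKL (Or.inl (mem_of_conj_mul_mul_ne_zero hfK hbK hx).1)) fun s hs => ?_
  exact funext fun x => by_contra fun hx => hs (hS (mem_of_conj_mul_mul_ne_zero hfK hbK hx).2)

end Convolution

/-- For a locally square integrable stationary point process `Λ` on a
unimodular lcsc group `G` with Haar measure `m`, for every bounded measurable `b ≥ 0` with
bounded support and `∫ b dm = 1` and all bounded measurable `f, g` with bounded support,
`E[ ∫∫ (f^⋆ ⋆ g)(x⁻¹y) b(x) dΛ(y) dΛ(x) ] = E[ conj(Λ(f)) · Λ(g) ]`. -/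
theorem statement3
    {G Ω : Type*} [Group G] [TopologicalSpace G] [IsTopologicalGroup G]
    [LocallyCompactSpace G] [SecondCountableTopology G]
    [MeasurableSpace G] [BorelSpace G]
    (m : Measure G) [m.IsHaarMeasure] [m.IsMulRightInvariant]
    [MeasurableSpace Ω] (ℙ : Measure Ω) [IsProbabilityMeasure ℙ]
    [MulAction G Ω]
    (hact : ∀ g : G, Measurable fun ω : Ω => g • ω)
    (hpres : ∀ g : G, MeasurePreserving (fun ω : Ω => g • ω) ℙ ℙ)
    (Λ : Ω → Measure G)
    (hΛmeas : ∀ B : Set G, MeasurableSet B → Measurable fun ω => Λ ω B)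
    (hequiv : ∀ (g : G) (ω : Ω), Λ (g • ω) = Measure.map (fun x => g * x) (Λ ω))
    (hL2 : ∀ B : Set G, MeasurableSet B → (∃ K : Set G, IsCompact K ∧ B ⊆ K) →
      ∫⁻ ω, (Λ ω B) ^ 2 ∂ℙ < ⊤)
    (b : G → ℝ) (hb_meas : Measurable b) (hb_nonneg : ∀ x, 0 ≤ b x)
    (hb_bdd : ∃ C : ℝ, ∀ x, b x ≤ C)
    (hb_supp : ∃ K : Set G, IsCompact K ∧ Function.support b ⊆ K)
    (hb_int : ∫ x, b x ∂m = 1)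
    (f g : G → ℂ) (hf_meas : Measurable f) (hg_meas : Measurable g)
    (hf_bdd : ∃ C : ℝ, ∀ x, ‖f x‖ ≤ C) (hg_bdd : ∃ C : ℝ, ∀ x, ‖g x‖ ≤ C)
    (hf_supp : ∃ K : Set G, IsCompact K ∧ Function.support f ⊆ K)
    (hg_supp : ∃ K : Set G, IsCompact K ∧ Function.support g ⊆ K) :
    ∫ ω, (∫ x, (∫ y, (∫ t, (starRingEnd ℂ) (f t⁻¹) * g (t⁻¹ * (x⁻¹ * y)) ∂m)
          ∂(Λ ω)) * (b x : ℂ) ∂(Λ ω)) ∂ℙ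
      = ∫ ω, (starRingEnd ℂ) (∫ x, f x ∂(Λ ω)) * (∫ x, g x ∂(Λ ω)) ∂ℙ := by
  have hΛ : Measurable Λ := Measure.measurable_of_measurable_coe Λ hΛmeas
  have hlf := ae_isFiniteMeasureOnCompacts hΛ hL2
  have hf : BddMeasurableBddSupport f := ⟨hf_meas, hf_bdd, hf_supp⟩
  have hg : BddMeasurableBddSupport g := ⟨hg_meas, hg_bdd, hg_supp⟩
  have hb : BddMeasurableBddSupport fun x => (b x : ℂ) := by
    obtain ⟨C, hC⟩ := hb_bdd
    refine ⟨Complex.measurable_ofReal.comp hb_meas, ⟨C, fun x => ?_⟩, by simpa using hb_supp⟩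
    simpa [abs_of_nonneg (hb_nonneg x)] using hC x
  have hb1 : ∫ x, (b x : ℂ) ∂m = 1 := by rw [integral_complex_ofReal, hb_int, Complex.ofReal_one]
  have hP := integrable_integral_inv_mul_mul_integral (m := m) hΛ hlf hL2 hf hg hb
  have hQ := integrable_integral_mul_integral_conj_mul_mul_left (m := m) hΛ hlf hL2 hf hg hb
  calc _ = ∫ ω, ∫ s, (∫ y, g (s⁻¹ * y) ∂Λ ω) * ∫ x, conj (f (s⁻¹ * x)) * b x ∂Λ ω ∂m ∂ℙ :=
        integral_congr_ae <| hlf.mono fun ω _ => integral_integral_conv_mul_eq hf hg hb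
    _ = ∫ ω, ∫ s, (∫ y, g y ∂Λ ω) * ∫ x, conj (f x) * b (s * x) ∂Λ ω ∂m ∂ℙ :=
        integral_integral_mul_eq_of_stationary hact hpres hequiv hP hQ
    _ = _ := integral_congr_ae <| hlf.mono fun ω _ =>
        integral_integral_conj_mul_mul_left_eq hf hb hb1 g
end

section
/- Let G be a unimodular locally compact second countable group with Haar measure m, equipped with a proper left-invariant metric d inducing its topology. Let r > 0 and let Λ : Ω → Measure(G) be a stationary point process on G (with respect to the left translation action) which is 2r-uniformly discrete and has intensity c > 0, i.e. E[Λ(B)] = c · m(B) for every Borel set B. Let h : G → ℝ be continuous with compact support such that h(g⁻¹) = h(g) for all g ∈ G, ∫_G h dm ≠ 0, and (h ⋆ h)(g) ≤ 0 whenever d(g, e) ≥ 2r, where (h ⋆ h)(x) := ∫_G h(t) h(t⁻¹x) dm(t). Then c ≤ ( ∫_G h² dm ) / ( ∫_G h dm )². -/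
/-!
Write `X = ∑_{x ∈ P} h x` for the linear statistic of `h`, `I = ∫ h` and `J = ∫ h²`. Campbell's
formula gives `𝔼 X = c I`, so by Cauchy–Schwarz it suffices to show `𝔼 X² ≤ c J`. To this end
consider
  `F t ω = (∑_{x ∈ P ω} h(x)² h(t⁻¹x)) · (∑_{y ∈ P ω} h(t⁻¹y))`.
Its integral over `t` is `∑_{x, y} h(x)² (h ⋆ h)(x⁻¹y)`. Distinct points are `2r` apart, so the
off-diagonal terms are `≤ 0` and `∫ F t ω dt ≤ J ∑_x h(x)²`, whose expectation is `c J²`. On the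
other hand stationarity gives `𝔼 ∫ F t ω dt = 𝔼 ∫ F t (t • ω) dt`, and by right invariance of `m`
the latter is `J 𝔼 X²`.

All sums run over the points in the compact windows `K = tsupport h` and `K K⁻¹ K`, which makes
them finite, uniformly bounded and continuous in `t`.
-/

open MeasureTheory ENNReal NNReal Metric Function
open scoped Pointwise

lemma Finset.sum_sum_mul_le_sum_mul_diag {ι : Type*} [DecidableEq ι] {S T : Finset ι}
    (hST : S ⊆ T) {a : ι → ℝ} (ha : ∀ x ∈ S, 0 ≤ a x) {k : ι → ι → ℝ}
    (hk : ∀ x ∈ S, ∀ y ∈ T, x ≠ y → k x y ≤ 0) :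
    ∑ x ∈ S, ∑ y ∈ T, a x * k x y ≤ ∑ x ∈ S, a x * k x x := by
  refine Finset.sum_le_sum fun x hx => ?_
  rw [← Finset.add_sum_erase _ _ (hST hx), add_le_iff_nonpos_right]
  exact Finset.sum_nonpos fun y hy =>
    mul_nonpos_of_nonneg_of_nonpos (ha x hx)
      (hk x hx y (Finset.mem_of_mem_erase hy) (Finset.ne_of_mem_erase hy).symm)

lemma IsCompact.exists_nonneg_bound_of_continuousOn {X E : Type*} [TopologicalSpace X]
    [SeminormedAddCommGroup E] {K : Set X} (hK : IsCompact K) {f : X → E} (hf : ContinuousOn f K) :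
    ∃ C, 0 ≤ C ∧ ∀ x ∈ K, ‖f x‖ ≤ C := by
  obtain ⟨C, hC⟩ := hK.exists_bound_of_continuousOn hf
  exact ⟨max C 0, le_max_right _ _, fun x hx => (hC x hx).trans (le_max_left _ _)⟩

lemma integrable_uncurry_of_norm_le {α β : Type*} [MeasurableSpace α] [MeasurableSpace β]
    {μ : Measure α} {ν : Measure β} [SFinite μ] [IsFiniteMeasure ν] {F : α → β → ℝ}
    (hF : Measurable (uncurry F)) {T : Set α} (hT : MeasurableSet T) (hμT : μ T ≠ ∞) {C : ℝ}
    (hC : ∀ a ∈ T, ∀ b, ‖F a b‖ ≤ C) (hzero : ∀ a ∉ T, ∀ b, F a b = 0) :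
    Integrable (uncurry F) (μ.prod ν) := by
  have hbound : Integrable ((T ×ˢ Set.univ).indicator fun _ => C) (μ.prod ν) :=
    (integrableOn_const (by simp [Measure.prod_prod, mul_ne_top hμT])).integrable_indicator
      (hT.prod MeasurableSet.univ)
  refine hbound.mono' hF.aestronglyMeasurable (ae_of_all _ fun p => ?_)
  by_cases hp : p.1 ∈ T
  · rw [Set.indicator_of_mem (Set.mk_mem_prod hp (Set.mem_univ p.2))]
    exact hC _ hp p.2
  · rw [Set.indicator_of_notMem fun h => hp h.1]
    simp [uncurry_def, hzero _ hp]

lemma mul_apply_inv_mul_eq_zero {G : Type*} [Group G] {a b : G → ℝ} {K L : Set G}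
    (ha : support a ⊆ K) (hb : support b ⊆ L) {t : G} (ht : t ∉ K * L⁻¹) (y : G) :
    a y * b (t⁻¹ * y) = 0 := by
  by_contra hne
  obtain ⟨hay, hby⟩ := mul_ne_zero_iff.1 hne
  exact ht (by simpa using Set.mul_mem_mul (ha hay) (Set.inv_mem_inv.2 (hb hby)))

section Packing

variable {X : Type*} [PseudoMetricSpace X]

lemma Metric.packingNumber_ne_top_of_isCompact {K : Set X} (hK : IsCompact K) {ε : ℝ≥0}
    (hε : ε ≠ 0) : packingNumber ε K ≠ ⊤ := by
  obtain ⟨N, -, hN, hcover⟩ := exists_finite_isCover_of_isCompact (ε := ε / 2) (by simpa) hK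
  refine ne_top_of_le_ne_top (Set.encard_ne_top_iff.2 hN) ?_
  calc packingNumber ε K = packingNumber (2 * (ε / 2)) K := by rw [mul_div_cancel₀ _ two_ne_zero]
    _ ≤ externalCoveringNumber (ε / 2) K := packingNumber_two_mul_le_externalCoveringNumber _ _
    _ ≤ N.encard := hcover.externalCoveringNumber_le_encard

lemma encard_inter_le_packingNumber {r : ℝ} (hr : 0 < r) {s : Set X}
    (hs : s.Pairwise fun x y => 2 * r ≤ dist x y) (K : Set X) :
    (s ∩ K).encard ≤ packingNumber r.toNNReal K := by
  refine IsSeparated.encard_le_packingNumber Set.inter_subset_right fun x hx y hy hxy => ?_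
  show ENNReal.ofReal r < edist x y
  rw [edist_dist, ENNReal.ofReal_lt_ofReal_iff_of_nonneg hr.le]
  linarith [hs hx.1 hy.1 hxy]

lemma finite_inter_of_pairwise_le_dist {r : ℝ} (hr : 0 < r) {s : Set X}
    (hs : s.Pairwise fun x y => 2 * r ≤ dist x y) {K : Set X} (hK : IsCompact K) :
    (s ∩ K).Finite :=
  Set.encard_ne_top_iff.1 <| ne_top_of_le_ne_top
    (packingNumber_ne_top_of_isCompact hK (Real.toNNReal_pos.2 hr).ne')
    (encard_inter_le_packingNumber hr hs K)

end Packing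

section Counting

variable {G : Type*} [MeasurableSpace G]

def IsCountingMeasure (Λ₀ : Measure G) (P₀ : Set G) : Prop :=
  ∀ B : Set G, MeasurableSet B → Λ₀ B = ((P₀ ∩ B).encard : ℝ≥0∞)

namespace IsCountingMeasure

variable {Λ₀ : Measure G} {P₀ K : Set G}

lemma restrict_eq_sum_dirac (hΛ₀ : IsCountingMeasure Λ₀ P₀) (hK : MeasurableSet K)
    (hfin : (P₀ ∩ K).Finite) : Λ₀.restrict K = ∑ x ∈ hfin.toFinset, Measure.dirac x := by
  classical
  ext B hB
  have hset : P₀ ∩ (B ∩ K) = ↑(hfin.toFinset.filter (· ∈ B)) := by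
    ext z
    simp only [Set.mem_inter_iff, Finset.coe_filter, Set.Finite.mem_toFinset, Set.mem_ofPred_eq]
    tauto
  rw [Measure.restrict_apply hB, hΛ₀ _ (hB.inter hK), Measure.finsetSum_apply, hset,
    Set.encard_coe_eq_coe_finsetCard]
  simp [Measure.dirac_apply' _ hB, Set.indicator_apply, Finset.sum_boole]

variable [MeasurableSingletonClass G]

lemma integrableOn (hΛ₀ : IsCountingMeasure Λ₀ P₀) (hK : MeasurableSet K)
    (hfin : (P₀ ∩ K).Finite) (φ : G → ℝ) : IntegrableOn φ K Λ₀ := by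
  rw [IntegrableOn, hΛ₀.restrict_eq_sum_dirac hK hfin]
  exact integrable_finsetSum_measure.2 fun x _ => integrable_dirac enorm_lt_top

lemma setIntegral_eq_sum (hΛ₀ : IsCountingMeasure Λ₀ P₀) (hK : MeasurableSet K)
    (hfin : (P₀ ∩ K).Finite) (φ : G → ℝ) : ∫ y in K, φ y ∂Λ₀ = ∑ x ∈ hfin.toFinset, φ x := by
  rw [hΛ₀.restrict_eq_sum_dirac hK hfin,
    integral_finsetSum_measure fun x _ => integrable_dirac enorm_lt_top]
  simp only [integral_dirac]

end IsCountingMeasure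

end Counting

namespace IsCountingMeasure

variable {G : Type*} [PseudoMetricSpace G] [MeasurableSpace G] {Λ₀ : Measure G} {P₀ K : Set G}
  {r : ℝ}

lemma measureReal_le_packingNumber (hΛ₀ : IsCountingMeasure Λ₀ P₀) (hr : 0 < r)
    (hP₀ : P₀.Pairwise fun x y => 2 * r ≤ dist x y) (hK : MeasurableSet K) (hKc : IsCompact K) :
    Λ₀.real K ≤ (packingNumber r.toNNReal K).toNat := by
  have hle := encard_inter_le_packingNumber hr hP₀ K
  have htop : packingNumber r.toNNReal K ≠ ⊤ :=
    packingNumber_ne_top_of_isCompact hKc (Real.toNNReal_pos.2 hr).ne'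
  rw [measureReal_def, hΛ₀ K hK, ← ENat.natCast_toNat (ne_top_of_le_ne_top htop hle)]
  simpa using ENat.toNat_le_toNat hle htop

lemma norm_setIntegral_le (hΛ₀ : IsCountingMeasure Λ₀ P₀) (hr : 0 < r)
    (hP₀ : P₀.Pairwise fun x y => 2 * r ≤ dist x y) (hK : MeasurableSet K) (hKc : IsCompact K)
    {φ : G → ℝ} {C : ℝ} (hC0 : 0 ≤ C) (hC : ∀ y ∈ K, ‖φ y‖ ≤ C) :
    ‖∫ y in K, φ y ∂Λ₀‖ ≤ C * (packingNumber r.toNNReal K).toNat := by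
  have hfin : Λ₀ K < ∞ := by
    rw [hΛ₀ K hK]
    exact_mod_cast (finite_inter_of_pairwise_le_dist hr hP₀ hKc).encard_lt_top
  exact (norm_setIntegral_le_of_norm_le_const hfin hC).trans
    (mul_le_mul_of_nonneg_left (hΛ₀.measureReal_le_packingNumber hr hP₀ hK hKc) hC0)

end IsCountingMeasure

section Intensity

variable {G Ω : Type*} [MeasurableSpace G] [MeasurableSpace Ω]

def HasIntensity (ℙ : Measure Ω) (Λ : Ω → Measure G) (c : ℝ≥0) (m : Measure G) : Prop :=
  ∀ B : Set G, MeasurableSet B → ∫⁻ ω, Λ ω B ∂ℙ = c * m B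

variable {ℙ : Measure Ω} {Λ : Ω → Measure G} {c : ℝ≥0} {m : Measure G}

lemma measurable_restrict_of_measurable (hΛ : Measurable Λ) {K : Set G} (hK : MeasurableSet K) :
    Measurable fun ω => (Λ ω).restrict K :=
  Measure.measurable_of_measurable_coe _ fun B hB => by
    simp only [Measure.restrict_apply hB]
    exact (Measure.measurable_coe (hB.inter hK)).comp hΛ

lemma measurable_integral_of_measurable_measure (hΛ : Measurable Λ) {φ : G → ℝ}
    (hφ : Measurable φ) (hφΛ : ∀ ω, Integrable φ (Λ ω)) :
    Measurable fun ω => ∫ y, φ y ∂Λ ω := by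
  simp_rw [fun ω => integral_eq_lintegral_pos_part_sub_lintegral_neg_part (hφΛ ω)]
  exact ((Measure.measurable_lintegral hφ.ennreal_ofReal).comp hΛ).ennreal_toReal.sub
    ((Measure.measurable_lintegral hφ.neg.ennreal_ofReal).comp hΛ).ennreal_toReal

namespace HasIntensity

lemma restrict (hΛc : HasIntensity ℙ Λ c m) {K : Set G} (hK : MeasurableSet K) :
    HasIntensity ℙ (fun ω => (Λ ω).restrict K) c (m.restrict K) := fun B hB => by
  simp only [Measure.restrict_apply hB, hΛc _ (hB.inter hK)]

lemma lintegral_lintegral (hΛc : HasIntensity ℙ Λ c m) (hΛ : Measurable Λ) {f : G → ℝ≥0∞}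
    (hf : Measurable f) : ∫⁻ ω, ∫⁻ y, f y ∂Λ ω ∂ℙ = c * ∫⁻ y, f y ∂m := by
  have hbind : ℙ.bind Λ = (c : ℝ≥0∞) • m := by
    ext B hB
    rw [Measure.bind_apply hB hΛ.aemeasurable, hΛc B hB, Measure.smul_apply, smul_eq_mul]
  rw [← Measure.lintegral_bind hΛ.aemeasurable hf.aemeasurable, hbind, lintegral_smul_measure,
    smul_eq_mul]

lemma integral_toReal_lintegral (hΛc : HasIntensity ℙ Λ c m) (hΛ : Measurable Λ)
    {f : G → ℝ≥0∞} (hf : Measurable f) (hfm : ∫⁻ y, f y ∂m ≠ ∞) :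
    Integrable (fun ω => (∫⁻ y, f y ∂Λ ω).toReal) ℙ ∧
      ∫ ω, (∫⁻ y, f y ∂Λ ω).toReal ∂ℙ = c * (∫⁻ y, f y ∂m).toReal := by
  have hmeas : Measurable fun ω => ∫⁻ y, f y ∂Λ ω := (Measure.measurable_lintegral hf).comp hΛ
  have hfin : ∫⁻ ω, ∫⁻ y, f y ∂Λ ω ∂ℙ ≠ ∞ := by
    rw [hΛc.lintegral_lintegral hΛ hf]
    exact mul_ne_top coe_ne_top hfm
  refine ⟨integrable_toReal_of_lintegral_ne_top hmeas.aemeasurable hfin, ?_⟩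
  rw [integral_toReal hmeas.aemeasurable (ae_lt_top hmeas hfin), hΛc.lintegral_lintegral hΛ hf,
    toReal_mul, coe_toReal]

/-- Campbell's formula. -/
lemma integral_integral (hΛc : HasIntensity ℙ Λ c m) (hΛ : Measurable Λ) {φ : G → ℝ}
    (hφ : Measurable φ) (hφm : Integrable φ m) (hφΛ : ∀ ω, Integrable φ (Λ ω)) :
    ∫ ω, ∫ y, φ y ∂Λ ω ∂ℙ = c * ∫ y, φ y ∂m := by
  obtain ⟨hpos, hpos_eq⟩ := hΛc.integral_toReal_lintegral hΛ hφ.ennreal_ofReal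
    hφm.lintegral_lt_top.ne
  obtain ⟨hneg, hneg_eq⟩ := hΛc.integral_toReal_lintegral (f := fun y => .ofReal (-φ y)) hΛ
    hφ.neg.ennreal_ofReal
    hφm.neg.lintegral_lt_top.ne
  rw [integral_congr_ae (ae_of_all _ fun ω =>
      integral_eq_lintegral_pos_part_sub_lintegral_neg_part (hφΛ ω)),
    integral_sub hpos hneg, hpos_eq, hneg_eq, ← mul_sub,
    integral_eq_lintegral_pos_part_sub_lintegral_neg_part hφm]

end HasIntensity

end Intensity

section Stationary

variable {G Ω : Type*} [Group G] [MulAction G Ω]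

lemma integral_smul_eq_self_of_measurePreserving [MeasurableSpace Ω] {ℙ : Measure Ω}
    (hact : ∀ g : G, Measurable fun ω : Ω => g • ω)
    (hpres : ∀ g : G, MeasurePreserving (fun ω : Ω => g • ω) ℙ ℙ) (g : G) (F : Ω → ℝ) :
    ∫ ω, F (g • ω) ∂ℙ = ∫ ω, F ω ∂ℙ :=
  have : MeasurableConstSMul G Ω := ⟨hact⟩
  (hpres g).integral_comp (MeasurableEquiv.smul g).measurableEmbedding F

/-- The mass transport principle. -/
lemma integral_integral_eq_of_smul [MeasurableSpace G] [MeasurableSpace Ω] {ℙ : Measure Ω}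
    [SFinite ℙ] (hact : ∀ g : G, Measurable fun ω : Ω => g • ω)
    (hpres : ∀ g : G, MeasurePreserving (fun ω : Ω => g • ω) ℙ ℙ) {m : Measure G} [SFinite m]
    {F F' : G → Ω → ℝ} (hF : Integrable (uncurry F) (m.prod ℙ))
    (hF' : Integrable (uncurry F') (m.prod ℙ)) (hshift : ∀ t ω, F t (t • ω) = F' t ω) :
    ∫ ω, ∫ t, F' t ω ∂m ∂ℙ = ∫ ω, ∫ t, F t ω ∂m ∂ℙ := by
  rw [← integral_integral_swap hF', ← integral_integral_swap hF]
  refine integral_congr_ae (ae_of_all _ fun t => ?_)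
  simp_rw [← hshift]
  exact integral_smul_eq_self_of_measurePreserving hact hpres t (F t)

lemma integral_smul_eq_integral_mul [MeasurableSpace G] [MeasurableMul G] {Λ : Ω → Measure G}
    (hequiv : ∀ (g : G) (ω : Ω), Λ (g • ω) = Measure.map (fun x => g * x) (Λ ω)) (g : G) (ω : Ω)
    {φ : G → ℝ} (hφ : Measurable φ) :
    ∫ y, φ y ∂Λ (g • ω) = ∫ y, φ (g * y) ∂Λ ω := by
  rw [hequiv, integral_map (measurable_const_mul g).aemeasurable hφ.aestronglyMeasurable]

lemma setIntegral_smul_eq [MeasurableSpace G] [MeasurableMul G] {Λ : Ω → Measure G}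
    (hequiv : ∀ (g : G) (ω : Ω), Λ (g • ω) = Measure.map (fun x => g * x) (Λ ω)) (t : G)
    (ω : Ω) {φ : G → ℝ} (hφ : Measurable φ) {K L : Set G} (hK : ∀ y ∉ K, φ y = 0)
    (hL : ∀ y ∉ L, φ (t * y) = 0) :
    ∫ y in K, φ y ∂Λ (t • ω) = ∫ y in L, φ (t * y) ∂Λ ω := by
  rw [setIntegral_eq_integral_of_forall_compl_eq_zero hK,
    setIntegral_eq_integral_of_forall_compl_eq_zero hL, integral_smul_eq_integral_mul hequiv t ω hφ]

lemma setIntegral_mul_setIntegral_smul [MeasurableSpace G] [MeasurableMul G]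
    {Λ : Ω → Measure G} {h : G → ℝ}
    (hequiv : ∀ (g : G) (ω : Ω), Λ (g • ω) = Measure.map (fun x => g * x) (Λ ω))
    (hh : Measurable h) {K K₂ : Set G} (hhK : support h ⊆ K) (hKK₂ : K * K⁻¹ * K ⊆ K₂)
    {a : G → ℝ} (ha : Measurable a) (haK : support a ⊆ K) (t : G) (ω : Ω) :
    (∫ y in K, a y * h (t⁻¹ * y) ∂Λ (t • ω)) * ∫ y in K₂, h (t⁻¹ * y) ∂Λ (t • ω) =
      (∫ y in K, a (t * y) * h y ∂Λ ω) * ∫ y in K, h y ∂Λ ω := by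
  have hhK' : ∀ y ∉ K, h y = 0 := fun y hy => notMem_support.1 fun h' => hy (hhK h')
  -- For `t ∈ K K⁻¹` the window `K₂` contains `t K`; otherwise both first factors vanish.
  by_cases ht : t ∈ K * K⁻¹
  · congr 1
    · rw [setIntegral_smul_eq hequiv t ω (φ := fun y => a y * h (t⁻¹ * y))
        (ha.mul (hh.comp (measurable_const_mul t⁻¹)))
        (fun y hy => by rw [notMem_support.1 fun h' => hy (haK h'), zero_mul])
        (L := K) fun y hy => by rw [inv_mul_cancel_left, hhK' y hy, mul_zero]]
      simp_rw [inv_mul_cancel_left]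
    · rw [setIntegral_smul_eq hequiv t ω (φ := fun y => h (t⁻¹ * y))
        (hh.comp (measurable_const_mul t⁻¹)) (fun y hy => ?_)
        (L := K) fun y hy => by rw [inv_mul_cancel_left, hhK' y hy]]
      · simp_rw [inv_mul_cancel_left]
      · refine notMem_support.1 fun h' => hy (hKK₂ ?_)
        simpa using Set.mul_mem_mul ht (hhK h')
  · have hzero := mul_apply_inv_mul_eq_zero haK hhK ht
    have hzero' : ∀ y, a (t * y) * h y = 0 := fun y => by simpa using hzero (t * y)
    simp only [hzero, hzero', integral_zero, zero_mul]

end Stationary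

section Convolution

variable {G : Type*} [Group G] [TopologicalSpace G] [IsTopologicalGroup G] {h : G → ℝ}

lemma HasCompactSupport.comp_inv_mul (hh : HasCompactSupport h) (x : G) :
    HasCompactSupport fun t => h (t⁻¹ * x) :=
  hh.comp_homeomorph ((Homeomorph.inv G).trans (Homeomorph.mulRight x))

variable [MeasurableSpace G] [BorelSpace G] {m : Measure G}

lemma integral_comp_inv_mul_mul_comp_inv_mul [m.IsMulLeftInvariant] (hh_symm : ∀ g, h g⁻¹ = h g)
    (x y : G) : ∫ t, h (t⁻¹ * x) * h (t⁻¹ * y) ∂m = ∫ s, h s * h (s⁻¹ * (x⁻¹ * y)) ∂m := by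
  rw [← integral_mul_left_eq_self _ x]
  congr 1 with s
  rw [show (x * s)⁻¹ * x = s⁻¹ by group, show (x * s)⁻¹ * y = s⁻¹ * (x⁻¹ * y) by group, hh_symm]

lemma integral_sum_mul_sum [m.IsMulLeftInvariant] [IsFiniteMeasureOnCompacts m]
    (hh_cont : Continuous h) (hh_supp : HasCompactSupport h) (hh_symm : ∀ g, h g⁻¹ = h g)
    (S T : Finset G) (a : G → ℝ) :
    ∫ t, (∑ x ∈ S, a x * h (t⁻¹ * x)) * ∑ y ∈ T, h (t⁻¹ * y) ∂m =
      ∑ x ∈ S, ∑ y ∈ T, a x * ∫ s, h s * h (s⁻¹ * (x⁻¹ * y)) ∂m := by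
  have hcont : ∀ x : G, Continuous fun t : G => h (t⁻¹ * x) := fun x =>
    hh_cont.comp (continuous_inv.mul continuous_const)
  have hint : ∀ x y : G, Integrable (fun t => a x * (h (t⁻¹ * x) * h (t⁻¹ * y))) m := fun x y =>
    (((hcont x).mul (hcont y)).integrable_of_hasCompactSupport
      ((hh_supp.comp_inv_mul x).mul_right)).const_mul _
  simp_rw [Finset.sum_mul_sum, mul_assoc]
  rw [integral_finsetSum _ fun x _ => integrable_finsetSum _ fun y _ => hint x y]
  refine Finset.sum_congr rfl fun x _ => ?_
  rw [integral_finsetSum _ fun y _ => hint x y]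
  refine Finset.sum_congr rfl fun y _ => ?_
  rw [integral_const_mul, integral_comp_inv_mul_mul_comp_inv_mul hh_symm]

lemma integral_sum_comp_mul_right [m.IsMulRightInvariant] {f : G → ℝ} (hf : Integrable f m)
    (S : Finset G) (a : G → ℝ) :
    ∫ t, ∑ x ∈ S, f (t * x) * a x ∂m = (∫ t, f t ∂m) * ∑ x ∈ S, a x := by
  rw [integral_finsetSum _ fun x _ => (hf.comp_mul_right x).mul_const _, Finset.mul_sum]
  refine Finset.sum_congr rfl fun x _ => ?_
  rw [integral_mul_const, integral_mul_right_eq_self]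

end Convolution

section Statistics

variable {G Ω : Type*} [MetricSpace G] [MeasurableSpace G] [BorelSpace G] [MeasurableSpace Ω]
  {Λ : Ω → Measure G} {P : Ω → Set G} {r : ℝ} {K : Set G}

lemma measurable_setIntegral (hΛ : Measurable Λ) (hcount : ∀ ω, IsCountingMeasure (Λ ω) (P ω))
    (hK : MeasurableSet K) (hfin : ∀ ω, (P ω ∩ K).Finite) {φ : G → ℝ} (hφ : Measurable φ) :
    Measurable fun ω => ∫ y in K, φ y ∂Λ ω :=
  measurable_integral_of_measurable_measure (measurable_restrict_of_measurable hΛ hK) hφ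
    fun ω => (hcount ω).integrableOn hK (hfin ω) φ

lemma memLp_top_setIntegral (ℙ : Measure Ω) (hΛ : Measurable Λ)
    (hcount : ∀ ω, IsCountingMeasure (Λ ω) (P ω)) (hr : 0 < r)
    (hsep : ∀ ω, (P ω).Pairwise fun x y => 2 * r ≤ dist x y) (hK : IsCompact K) {φ : G → ℝ}
    (hφ : Continuous φ) : MemLp (fun ω => ∫ y in K, φ y ∂Λ ω) ∞ ℙ := by
  obtain ⟨C, hC0, hC⟩ := hK.exists_nonneg_bound_of_continuousOn hφ.continuousOn
  exact memLp_top_of_bound (measurable_setIntegral hΛ hcount hK.measurableSet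
      (fun ω => finite_inter_of_pairwise_le_dist hr (hsep ω) hK) hφ.measurable).aestronglyMeasurable
    _ (ae_of_all _ fun ω =>
      (hcount ω).norm_setIntegral_le hr (hsep ω) hK.measurableSet hK hC0 hC)

lemma measurable_uncurry_setIntegral [SecondCountableTopology G] (hΛ : Measurable Λ)
    (hcount : ∀ ω, IsCountingMeasure (Λ ω) (P ω)) (hK : MeasurableSet K)
    (hfin : ∀ ω, (P ω ∩ K).Finite) {φ : G → G → ℝ} (hφ : Continuous (uncurry φ)) :
    Measurable (uncurry fun t ω => ∫ y in K, φ t y ∂Λ ω) := by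
  refine measurable_uncurry_of_continuous_of_measurable (fun ω => ?_)
    fun t => measurable_setIntegral hΛ hcount hK hfin (hφ.uncurry_left t).measurable
  simp_rw [(hcount ω).setIntegral_eq_sum hK (hfin ω)]
  exact continuous_finsetSum _ fun y _ => hφ.uncurry_right y

lemma integrable_uncurry_setIntegral_mul [SecondCountableTopology G] {ℙ : Measure Ω}
    [IsFiniteMeasure ℙ] {m : Measure G} [SFinite m] [IsFiniteMeasureOnCompacts m]
    (hΛ : Measurable Λ) (hcount : ∀ ω, IsCountingMeasure (Λ ω) (P ω)) (hr : 0 < r)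
    (hsep : ∀ ω, (P ω).Pairwise fun x y => 2 * r ≤ dist x y) {K₁ K₂ T : Set G}
    (hK₁ : IsCompact K₁) (hK₂ : IsCompact K₂) (hT : IsCompact T) {φ₁ φ₂ : G → G → ℝ}
    (hφ₁ : Continuous (uncurry φ₁)) (hφ₂ : Continuous (uncurry φ₂))
    (hφ₁T : ∀ t ∉ T, ∀ y, φ₁ t y = 0) :
    Integrable (uncurry fun t ω => (∫ y in K₁, φ₁ t y ∂Λ ω) * ∫ y in K₂, φ₂ t y ∂Λ ω)
      (m.prod ℙ) := by
  have hfin : ∀ {K}, IsCompact K → ∀ ω, (P ω ∩ K).Finite := fun hK ω =>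
    finite_inter_of_pairwise_le_dist hr (hsep ω) hK
  obtain ⟨C₁, hC₁0, hC₁⟩ := (hT.prod hK₁).exists_nonneg_bound_of_continuousOn hφ₁.continuousOn
  obtain ⟨C₂, hC₂0, hC₂⟩ := (hT.prod hK₂).exists_nonneg_bound_of_continuousOn hφ₂.continuousOn
  refine integrable_uncurry_of_norm_le (C := C₁ * (packingNumber r.toNNReal K₁).toNat *
      (C₂ * (packingNumber r.toNNReal K₂).toNat))
    ((measurable_uncurry_setIntegral hΛ hcount hK₁.measurableSet (hfin hK₁) hφ₁).mul
      (measurable_uncurry_setIntegral hΛ hcount hK₂.measurableSet (hfin hK₂) hφ₂))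
    hT.measurableSet hT.measure_lt_top.ne (fun t ht ω => ?_) fun t ht ω => by simp [hφ₁T t ht]
  rw [norm_mul]
  exact mul_le_mul
    ((hcount ω).norm_setIntegral_le hr (hsep ω) hK₁.measurableSet hK₁ hC₁0
      fun y hy => hC₁ (t, y) ⟨ht, hy⟩)
    ((hcount ω).norm_setIntegral_le hr (hsep ω) hK₂.measurableSet hK₂ hC₂0
      fun y hy => hC₂ (t, y) ⟨ht, hy⟩)
    (norm_nonneg _) (by positivity)

lemma HasIntensity.integral_setIntegral {ℙ : Measure Ω} {c : ℝ≥0} {m : Measure G}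
    (hΛc : HasIntensity ℙ Λ c m) (hΛ : Measurable Λ)
    (hcount : ∀ ω, IsCountingMeasure (Λ ω) (P ω)) (hK : MeasurableSet K)
    (hfin : ∀ ω, (P ω ∩ K).Finite) {φ : G → ℝ} (hφ : Measurable φ) (hφK : ∀ y ∉ K, φ y = 0)
    (hφm : Integrable φ m) :
    ∫ ω, ∫ y in K, φ y ∂Λ ω ∂ℙ = c * ∫ y, φ y ∂m := by
  rw [(hΛc.restrict hK).integral_integral (measurable_restrict_of_measurable hΛ hK) hφ
    hφm.integrableOn fun ω => (hcount ω).integrableOn hK (hfin ω) φ,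
    setIntegral_eq_integral_of_forall_compl_eq_zero hφK]

end Statistics

section SecondMoment

variable {G Ω : Type*} [Group G] [MetricSpace G] [IsTopologicalGroup G] [MeasurableSpace G]
  [BorelSpace G] [MeasurableSpace Ω] {m : Measure G} {h : G → ℝ} {r : ℝ}

lemma IsCountingMeasure.integral_setIntegral_comp_mul_right [m.IsMulRightInvariant]
    {Λ₀ : Measure G} {P₀ K : Set G} (hΛ₀ : IsCountingMeasure Λ₀ P₀) (hK : MeasurableSet K)
    (hfin : (P₀ ∩ K).Finite) {a : G → ℝ} (ha : Integrable a m) (φ : G → ℝ) :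
    ∫ t, ∫ y in K, a (t * y) * φ y ∂Λ₀ ∂m = (∫ t, a t ∂m) * ∫ y in K, φ y ∂Λ₀ := by
  simp_rw [hΛ₀.setIntegral_eq_sum hK hfin]
  exact integral_sum_comp_mul_right ha _ _

lemma IsCountingMeasure.integral_setIntegral_mul_setIntegral_le [m.IsMulLeftInvariant]
    [IsFiniteMeasureOnCompacts m] (hinv : ∀ g x y : G, dist (g * x) (g * y) = dist x y)
    (hh_cont : Continuous h) (hh_supp : HasCompactSupport h) (hh_symm : ∀ g, h g⁻¹ = h g)
    (hh_conv : ∀ g : G, 2 * r ≤ dist g 1 → (∫ t, h t * h (t⁻¹ * g) ∂m) ≤ 0)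
    {Λ₀ : Measure G} {P₀ K₁ K₂ : Set G} (hΛ₀ : IsCountingMeasure Λ₀ P₀)
    (hP₀ : P₀.Pairwise fun x y => 2 * r ≤ dist x y) (hK₁ : MeasurableSet K₁)
    (hK₂ : MeasurableSet K₂) (hfin₁ : (P₀ ∩ K₁).Finite) (hfin₂ : (P₀ ∩ K₂).Finite)
    (hK₁₂ : K₁ ⊆ K₂) {a : G → ℝ} (ha : ∀ y, 0 ≤ a y) :
    ∫ t, (∫ y in K₁, a y * h (t⁻¹ * y) ∂Λ₀) * ∫ y in K₂, h (t⁻¹ * y) ∂Λ₀ ∂m ≤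
      (∫ x, h x ^ 2 ∂m) * ∫ y in K₁, a y ∂Λ₀ := by
  classical
  simp_rw [hΛ₀.setIntegral_eq_sum hK₁ hfin₁, hΛ₀.setIntegral_eq_sum hK₂ hfin₂]
  rw [integral_sum_mul_sum hh_cont hh_supp hh_symm, Finset.mul_sum]
  have hsub : hfin₁.toFinset ⊆ hfin₂.toFinset := fun x hx => by
    simp only [Set.Finite.mem_toFinset] at hx ⊢
    exact ⟨hx.1, hK₁₂ hx.2⟩
  refine (Finset.sum_sum_mul_le_sum_mul_diag hsub (fun x _ => ha x) fun x hx y hy hxy =>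
    hh_conv _ ?_).trans_eq (Finset.sum_congr rfl fun x _ => ?_)
  · rw [← hinv x, mul_inv_cancel_left, mul_one, dist_comm]
    exact hP₀ (Set.Finite.mem_toFinset _ |>.1 hx).1 (Set.Finite.mem_toFinset _ |>.1 hy).1 hxy
  · rw [inv_mul_cancel, mul_comm]
    congr 2 with s
    rw [mul_one, hh_symm, pow_two]

lemma integrable_uncurry_setIntegral_pair [SecondCountableTopology G] [SFinite m]
    [IsFiniteMeasureOnCompacts m] {ℙ : Measure Ω} [IsFiniteMeasure ℙ] {Λ : Ω → Measure G}
    (hΛ : Measurable Λ) {P : Ω → Set G} (hcount : ∀ ω, IsCountingMeasure (Λ ω) (P ω))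
    (hr : 0 < r) (hsep : ∀ ω, (P ω).Pairwise fun x y => 2 * r ≤ dist x y)
    (hh_cont : Continuous h) (hh_supp : HasCompactSupport h) :
    Integrable (uncurry fun t ω => (∫ y in tsupport h, h y ^ 2 * h (t⁻¹ * y) ∂Λ ω) *
      ∫ y in tsupport h * (tsupport h)⁻¹ * tsupport h, h (t⁻¹ * y) ∂Λ ω) (m.prod ℙ) ∧
    Integrable (uncurry fun t ω => (∫ y in tsupport h, h (t * y) ^ 2 * h y ∂Λ ω) *
      ∫ y in tsupport h, h y ∂Λ ω) (m.prod ℙ) := by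
  have hKc : IsCompact (tsupport h) := hh_supp
  have hh2K : support (fun y => h y ^ 2) ⊆ tsupport h := by
    rw [support_pow _ two_ne_zero]
    exact subset_tsupport h
  have hcont_inv : Continuous fun p : G × G => h (p.1⁻¹ * p.2) :=
    hh_cont.comp (continuous_fst.inv.mul continuous_snd)
  refine ⟨integrable_uncurry_setIntegral_mul hΛ hcount hr hsep hKc ((hKc.mul hKc.inv).mul hKc)
      (hKc.mul hKc.inv) (((hh_cont.pow 2).comp continuous_snd).mul hcont_inv) hcont_inv
      fun t ht => mul_apply_inv_mul_eq_zero hh2K (subset_tsupport h) ht,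
    integrable_uncurry_setIntegral_mul (φ₁ := fun t y => h (t * y) ^ 2 * h y)
      (φ₂ := fun _ y => h y) hΛ hcount hr hsep hKc hKc (hKc.mul hKc.inv)
      (((hh_cont.pow 2).comp continuous_mul).mul (hh_cont.comp continuous_snd))
      (hh_cont.comp continuous_snd) fun t ht y => ?_⟩
  simpa using mul_apply_inv_mul_eq_zero hh2K (subset_tsupport h) ht (t * y)

lemma integral_sq_setIntegral_le [SecondCountableTopology G]
    (hinv : ∀ g x y : G, dist (g * x) (g * y) = dist x y)
    [m.IsHaarMeasure] [m.IsMulRightInvariant] [SFinite m] (hr : 0 < r)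
    {ℙ : Measure Ω} [IsFiniteMeasure ℙ] [MulAction G Ω]
    (hact : ∀ g : G, Measurable fun ω : Ω => g • ω)
    (hpres : ∀ g : G, MeasurePreserving (fun ω : Ω => g • ω) ℙ ℙ)
    {Λ : Ω → Measure G} (hΛ : Measurable Λ)
    (hequiv : ∀ (g : G) (ω : Ω), Λ (g • ω) = Measure.map (fun x => g * x) (Λ ω))
    {P : Ω → Set G} (hsep : ∀ ω, (P ω).Pairwise fun x y => 2 * r ≤ dist x y)
    (hcount : ∀ ω, IsCountingMeasure (Λ ω) (P ω)) {c : ℝ≥0} (hΛc : HasIntensity ℙ Λ c m)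
    {h : G → ℝ} (hh_cont : Continuous h) (hh_supp : HasCompactSupport h)
    (hh_symm : ∀ g : G, h g⁻¹ = h g) (hh_ne : h ≠ 0)
    (hh_conv : ∀ g : G, 2 * r ≤ dist g 1 → (∫ t, h t * h (t⁻¹ * g) ∂m) ≤ 0) :
    ∫ ω, (∫ y in tsupport h, h y ∂Λ ω) ^ 2 ∂ℙ ≤ c * ∫ x, h x ^ 2 ∂m := by
  obtain ⟨hF, hF'⟩ := integrable_uncurry_setIntegral_pair (m := m) (ℙ := ℙ) hΛ hcount hr hsep
    hh_cont hh_supp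
  set K := tsupport h
  have hKc : IsCompact K := hh_supp
  have hK₂c : IsCompact (K * K⁻¹ * K) := (hKc.mul hKc.inv).mul hKc
  have hfin : ∀ {L}, IsCompact L → ∀ ω, (P ω ∩ L).Finite := fun hL ω =>
    finite_inter_of_pairwise_le_dist hr (hsep ω) hL
  have hh2_supp : HasCompactSupport fun y => h y ^ 2 :=
    hh_supp.comp_left (g := fun x : ℝ => x ^ 2) (zero_pow two_ne_zero)
  have hh2m : Integrable (fun y => h y ^ 2) m :=
    (hh_cont.pow 2).integrable_of_hasCompactSupport hh2_supp
  set J := ∫ x, h x ^ 2 ∂m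
  have hJ : 0 < J := by
    obtain ⟨x, hx⟩ := Function.ne_iff.1 hh_ne
    exact (hh_cont.pow 2).integral_pos_of_hasCompactSupport_nonneg_nonzero hh2_supp
      (fun y => sq_nonneg (h y)) (pow_ne_zero 2 hx)
  refine le_of_mul_le_mul_left ?_ hJ
  calc J * ∫ ω, (∫ y in K, h y ∂Λ ω) ^ 2 ∂ℙ
      = ∫ ω, ∫ t, (∫ y in K, h (t * y) ^ 2 * h y ∂Λ ω) * ∫ y in K, h y ∂Λ ω ∂m ∂ℙ := by
        rw [← integral_const_mul]
        refine integral_congr_ae (ae_of_all _ fun ω => ?_)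
        dsimp only
        rw [integral_mul_const, (hcount ω).integral_setIntegral_comp_mul_right
          hKc.measurableSet (hfin hKc ω) hh2m, pow_two, mul_assoc]
    _ = ∫ ω, ∫ t, (∫ y in K, h y ^ 2 * h (t⁻¹ * y) ∂Λ ω) *
          ∫ y in K * K⁻¹ * K, h (t⁻¹ * y) ∂Λ ω ∂m ∂ℙ :=
        integral_integral_eq_of_smul hact hpres hF hF' <|
          setIntegral_mul_setIntegral_smul hequiv hh_cont.measurable (subset_tsupport h)
            subset_rfl (hh_cont.pow 2).measurable (by
              rw [support_pow _ two_ne_zero]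
              exact subset_tsupport h)
    _ ≤ ∫ ω, J * ∫ y in K, h y ^ 2 ∂Λ ω ∂ℙ :=
        integral_mono hF.integral_prod_right ((memLp_top_setIntegral ℙ hΛ hcount hr hsep hKc
          (hh_cont.pow 2)).integrable le_top |>.const_mul J) fun ω =>
          (hcount ω).integral_setIntegral_mul_setIntegral_le hinv hh_cont hh_supp hh_symm hh_conv
            (hsep ω) hKc.measurableSet hK₂c.measurableSet (hfin hKc ω) (hfin hK₂c ω)
            (fun y hy => by
              simpa using Set.mul_mem_mul (Set.mul_mem_mul hy (Set.inv_mem_inv.2 hy)) hy)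
            fun y => sq_nonneg (h y)
    _ = J * (c * J) := by
        rw [integral_const_mul, hΛc.integral_setIntegral (φ := fun y => h y ^ 2) hΛ hcount
          hKc.measurableSet (hfin hKc) (hh_cont.pow 2).measurable
          (fun y hy => by simp [image_eq_zero_of_notMem_tsupport hy]) hh2m]

end SecondMoment

/-- Let `G` be a unimodular lcsc group with Haar measure `m`, equipped with
a proper left-invariant metric inducing its topology.  Let `Λ` be a `2r`-uniformly discrete
stationary point process with intensity `c > 0`.  If `h : G → ℝ` is continuous with compact
support, symmetric (`h(g⁻¹) = h(g)`), has `∫ h dm ≠ 0` and `(h ⋆ h)(g) ≤ 0` whenever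
`d(g, e) ≥ 2r`, then `c ≤ (∫ h² dm) / (∫ h dm)²`. -/
theorem statement11
    {G Ω : Type*} [Group G] [MetricSpace G] [ProperSpace G]
    [IsTopologicalGroup G] [SecondCountableTopology G]
    [MeasurableSpace G] [BorelSpace G]
    (hinv : ∀ g x y : G, dist (g * x) (g * y) = dist x y)
    (m : Measure G) [m.IsHaarMeasure] [m.IsMulRightInvariant]
    (r : ℝ) (hr : 0 < r)
    [MeasurableSpace Ω] (ℙ : Measure Ω) [IsProbabilityMeasure ℙ]
    [MulAction G Ω]
    (hact : ∀ g : G, Measurable fun ω : Ω => g • ω)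
    (hpres : ∀ g : G, MeasurePreserving (fun ω : Ω => g • ω) ℙ ℙ)
    (Λ : Ω → Measure G)
    (hΛmeas : ∀ B : Set G, MeasurableSet B → Measurable fun ω => Λ ω B)
    (hequiv : ∀ (g : G) (ω : Ω), Λ (g • ω) = Measure.map (fun x => g * x) (Λ ω))
    (P : Ω → Set G)
    (hsep : ∀ ω : Ω, ∀ x ∈ P ω, ∀ y ∈ P ω, x ≠ y → 2 * r ≤ dist x y)
    (hcount : ∀ (ω : Ω) (B : Set G), MeasurableSet B → Λ ω B = ((P ω ∩ B).encard : ℝ≥0∞))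
    (c : ℝ≥0) (hc : 0 < c)
    (hintensity : ∀ B : Set G, MeasurableSet B → ∫⁻ ω, Λ ω B ∂ℙ = c * m B)
    (h : G → ℝ) (hh_cont : Continuous h) (hh_supp : HasCompactSupport h)
    (hh_symm : ∀ g : G, h g⁻¹ = h g)
    (hh_int : ∫ x, h x ∂m ≠ 0)
    (hh_conv : ∀ g : G, 2 * r ≤ dist g 1 → (∫ t, h t * h (t⁻¹ * g) ∂m) ≤ 0) :
    (c : ℝ) ≤ (∫ x, (h x) ^ 2 ∂m) / (∫ x, h x ∂m) ^ 2 := by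
  have hΛ : Measurable Λ := Measure.measurable_of_measurable_coe Λ hΛmeas
  have hsep' : ∀ ω, (P ω).Pairwise fun x y => 2 * r ≤ dist x y := fun ω x hx y hy =>
    hsep ω x hx y hy
  have hh_ne : h ≠ 0 := by
    rintro rfl
    simp at hh_int
  set X := fun ω => ∫ y in tsupport h, h y ∂Λ ω
  have hX : MemLp X 2 ℙ :=
    (memLp_top_setIntegral ℙ hΛ hcount hr hsep' hh_supp hh_cont).mono_exponent le_top
  have hmean : ∫ ω, X ω ∂ℙ = c * ∫ x, h x ∂m :=
    HasIntensity.integral_setIntegral hintensity hΛ hcount hh_supp.isCompact.measurableSet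
      (fun ω => finite_inter_of_pairwise_le_dist hr (hsep' ω) hh_supp)
      hh_cont.measurable (fun y hy => image_eq_zero_of_notMem_tsupport hy)
      (hh_cont.integrable_of_hasCompactSupport hh_supp)
  have hsecond : ∫ ω, X ω ^ 2 ∂ℙ ≤ c * ∫ x, h x ^ 2 ∂m :=
    integral_sq_setIntegral_le hinv hr hact hpres hΛ hequiv hsep' hcount hintensity hh_cont hh_supp
      hh_symm hh_ne hh_conv
  have hvar : (∫ ω, X ω ∂ℙ) ^ 2 ≤ ∫ ω, X ω ^ 2 ∂ℙ := by
    have := ProbabilityTheory.variance_nonneg X ℙ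
    rw [ProbabilityTheory.variance_eq_sub hX] at this
    simpa using this
  rw [le_div_iff₀ (by positivity)]
  refine le_of_mul_le_mul_left ?_ (NNReal.coe_pos.2 hc)
  calc (c : ℝ) * (c * (∫ x, h x ∂m) ^ 2) = (∫ ω, X ω ∂ℙ) ^ 2 := by rw [hmean]; ring
    _ ≤ ∫ ω, X ω ^ 2 ∂ℙ := hvar
    _ ≤ c * ∫ x, h x ^ 2 ∂m := hsecond
end

section
/- Let G be a compact metrizable abelian topological group (written multiplicatively) with identity element 1, equipped with a translation-invariant metric d inducing its topology. Let r > 0 and let P ⊆ G be a finite set with d(x, y) ≥ 2r for all distinct x, y ∈ P. Let S be a finite set of continuous characters χ : G → ℂ (continuous homomorphisms into the unit circle) containing the trivial character 𝟙, let (a_χ)_{χ ∈ S} be nonnegative real coefficients with a_𝟙 > 0, and set f(g) := Re( ∑_{χ ∈ S} a_χ χ(g) ). If f(g) ≤ 0 whenever d(g, 1) ≥ 2r, then #P ≤ f(1) / a_𝟙. -/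
/-!
Sum the function `g ↦ f (x⁻¹ * y)` over all pairs `x, y ∈ P`. Expanding `f` in characters, each
character contributes `a_χ |∑_{x ∈ P} χ x|²`, so the double sum is at least the contribution
`a_𝟙 (#P)²` of the trivial character. On the other hand, translation invariance turns the
separation of `P` into `d(x⁻¹ * y, 1) ≥ 2r` for `x ≠ y`, so only the diagonal terms can be
positive, and the double sum is at most `#P · f 1`.
-/

open ComplexConjugate

section Characters

variable {G : Type*} [Group G] {χ : G → ℂ}

theorem apply_one_eq_one_of_map_mul (hmul : ∀ x y, χ (x * y) = χ x * χ y)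
    (hnorm : ∀ x, ‖χ x‖ = 1) : χ 1 = 1 := by
  have hne : χ 1 ≠ 0 := norm_ne_zero_iff.mp (by simp [hnorm])
  exact mul_left_cancel₀ hne (by rw [mul_one, ← hmul, mul_one])

theorem apply_inv_eq_conj_of_map_mul (hmul : ∀ x y, χ (x * y) = χ x * χ y)
    (hnorm : ∀ x, ‖χ x‖ = 1) (x : G) : χ x⁻¹ = conj (χ x) := by
  have hne : χ x ≠ 0 := norm_ne_zero_iff.mp (by simp [hnorm])
  refine mul_right_cancel₀ hne ?_
  rw [← hmul, inv_mul_cancel, apply_one_eq_one_of_map_mul hmul hnorm, mul_comm,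
    Complex.mul_conj', hnorm]
  norm_num

theorem sum_sum_apply_inv_mul_eq_norm_sum_sq (hmul : ∀ x y, χ (x * y) = χ x * χ y)
    (hnorm : ∀ x, ‖χ x‖ = 1) (P : Finset G) :
    ∑ x ∈ P, ∑ y ∈ P, χ (x⁻¹ * y) = (‖∑ x ∈ P, χ x‖ : ℂ) ^ 2 := by
  simp only [hmul, apply_inv_eq_conj_of_map_mul hmul hnorm, ← Finset.mul_sum, ← Finset.sum_mul,
    ← map_sum, Complex.conj_mul']

end Characters

theorem sum_sum_re_sum_apply_inv_mul {G ι : Type*} [Group G] (S : Finset ι) (χ : ι → G → ℂ)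
    (hmul : ∀ i ∈ S, ∀ x y, χ i (x * y) = χ i x * χ i y) (hnorm : ∀ i ∈ S, ∀ x, ‖χ i x‖ = 1)
    (a : ι → ℝ) (P : Finset G) :
    ∑ x ∈ P, ∑ y ∈ P, (∑ i ∈ S, (a i : ℂ) * χ i (x⁻¹ * y)).re
      = ∑ i ∈ S, a i * ‖∑ x ∈ P, χ i x‖ ^ 2 := by
  have hswap : ∑ x ∈ P, ∑ y ∈ P, ∑ i ∈ S, (a i : ℂ) * χ i (x⁻¹ * y)
      = ∑ i ∈ S, (a i : ℂ) * ∑ x ∈ P, ∑ y ∈ P, χ i (x⁻¹ * y) := by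
    simp only [Finset.mul_sum]
    exact (Finset.sum_congr rfl fun _ _ => Finset.sum_comm).trans Finset.sum_comm
  calc _ = (∑ x ∈ P, ∑ y ∈ P, ∑ i ∈ S, (a i : ℂ) * χ i (x⁻¹ * y)).re := by
        simp only [Complex.re_sum]
    _ = _ := by
      rw [hswap, Complex.re_sum]
      refine Finset.sum_congr rfl fun i hi => ?_
      rw [sum_sum_apply_inv_mul_eq_norm_sum_sq (hmul i hi) (hnorm i hi)]
      norm_cast

theorem sum_sum_apply_inv_mul_le_card_mul {G : Type*} [Group G] [PseudoMetricSpace G]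
    (hinv : ∀ g x y : G, dist (g * x) (g * y) = dist x y) {δ : ℝ} {P : Finset G}
    (hsep : ∀ x ∈ P, ∀ y ∈ P, x ≠ y → δ ≤ dist x y) {f : G → ℝ}
    (hneg : ∀ g : G, δ ≤ dist g 1 → f g ≤ 0) :
    ∑ x ∈ P, ∑ y ∈ P, f (x⁻¹ * y) ≤ P.card * f 1 := by
  classical
  have hrow : ∀ x ∈ P, ∑ y ∈ P, f (x⁻¹ * y) ≤ f 1 := by
    intro x hx
    rw [← Finset.add_sum_erase _ _ hx, inv_mul_cancel, add_le_iff_nonpos_right]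
    refine Finset.sum_nonpos fun y hy => hneg _ ?_
    obtain ⟨hyx, hyP⟩ := Finset.mem_erase.mp hy
    calc δ ≤ dist x y := hsep x hx y hyP hyx.symm
      _ = dist (x⁻¹ * y) 1 := by rw [← hinv x⁻¹, inv_mul_cancel, dist_comm]
  simpa using Finset.sum_le_sum hrow

theorem statement14_general
    {G ι : Type*} [CommGroup G] [MetricSpace G]
    (hinv : ∀ g x y : G, dist (g * x) (g * y) = dist x y)
    (r : ℝ)
    (P : Finset G) (hsep : ∀ x ∈ P, ∀ y ∈ P, x ≠ y → 2 * r ≤ dist x y)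
    (S : Finset ι) (χ : ι → G → ℂ)
    (hχ_hom : ∀ i ∈ S, ∀ x y : G, χ i (x * y) = χ i x * χ i y)
    (hχ_unit : ∀ i ∈ S, ∀ x : G, ‖χ i x‖ = 1)
    (i₀ : ι) (hi₀ : i₀ ∈ S) (hχtriv : ∀ x : G, χ i₀ x = 1)
    (a : ι → ℝ) (ha : ∀ i ∈ S, 0 ≤ a i) (ha₀ : 0 < a i₀)
    (f : G → ℝ) (hf : ∀ g : G, f g = (∑ i ∈ S, (a i : ℂ) * χ i g).re)
    (hneg : ∀ g : G, 2 * r ≤ dist g 1 → f g ≤ 0) :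
    (P.card : ℝ) ≤ f 1 / a i₀ := by
  have hexpand := sum_sum_re_sum_apply_inv_mul S χ hχ_hom hχ_unit a
  have hlower : a i₀ * (P.card : ℝ) ^ 2 ≤ ∑ x ∈ P, ∑ y ∈ P, f (x⁻¹ * y) := by
    simp only [hf, hexpand]
    simpa [hχtriv] using Finset.single_le_sum (f := fun i => a i * ‖∑ x ∈ P, χ i x‖ ^ 2)
      (fun i hi => mul_nonneg (ha i hi) (sq_nonneg _)) hi₀
  have hupper := sum_sum_apply_inv_mul_le_card_mul hinv hsep hneg
  have hf1 : 0 ≤ f 1 := by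
    have hdiag := hexpand {1}
    simp only [Finset.sum_singleton, inv_one, mul_one, ← hf] at hdiag
    exact hdiag ▸ Finset.sum_nonneg fun i hi => mul_nonneg (ha i hi) (sq_nonneg _)
  rw [le_div_iff₀ ha₀]
  nlinarith

/-- (Delsarte-type bound.)  Let `G` be a compact metrizable abelian group
with a translation-invariant metric, `r > 0` and `P ⊆ G` a finite `2r`-separated set.  Let
`S` be a finite set of continuous characters of `G` containing the trivial one, with
nonnegative coefficients `a_χ` and `a_𝟙 > 0`, and `f(g) = Re(∑_χ a_χ χ(g))`.  If `f(g) ≤ 0`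
whenever `d(g, 1) ≥ 2r`, then `#P ≤ f(1)/a_𝟙`. -/
theorem statement14
    {G ι : Type*} [CommGroup G] [MetricSpace G] [CompactSpace G] [IsTopologicalGroup G]
    (hinv : ∀ g x y : G, dist (g * x) (g * y) = dist x y)
    (r : ℝ) (hr : 0 < r)
    (P : Finset G) (hsep : ∀ x ∈ P, ∀ y ∈ P, x ≠ y → 2 * r ≤ dist x y)
    (S : Finset ι) (χ : ι → G → ℂ)
    (hχ_cont : ∀ i ∈ S, Continuous (χ i))
    (hχ_hom : ∀ i ∈ S, ∀ x y : G, χ i (x * y) = χ i x * χ i y)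
    (hχ_unit : ∀ i ∈ S, ∀ x : G, ‖χ i x‖ = 1)
    (i₀ : ι) (hi₀ : i₀ ∈ S) (hχtriv : ∀ x : G, χ i₀ x = 1)
    (a : ι → ℝ) (ha : ∀ i ∈ S, 0 ≤ a i) (ha₀ : 0 < a i₀)
    (f : G → ℝ) (hf : ∀ g : G, f g = (∑ i ∈ S, (a i : ℂ) * χ i g).re)
    (hneg : ∀ g : G, 2 * r ≤ dist g 1 → f g ≤ 0) :
    (P.card : ℝ) ≤ f 1 / a i₀ :=
  statement14_general hinv r P hsep S χ hχ_hom hχ_unit i₀ hi₀ hχtriv a ha ha₀ f hf hneg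
end
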